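/- arXiv:2211.11719 — 2 statements merged into one kernel-verified Lean document; each statement's English description precedes it below -/
import Mathlib

section
/- Let τ = sup_{f,g∈ℱ} E_Q[(f−g)²]/E_P[(f−g)²]. Suppose there exists f⋆ ∈ ℱ with E_{(P+Q)/2}[(y(x) − f⋆(x))²] ≤ ε. Then for every f ∈ ℱ, E_Q[(y(x) − f(x))²] ≤ (8τ + 4)ε + 4τ · E_P[(y(x) − f(x))²]. -/
open MeasureTheory

/-- If `τ` bounds the restricted error ratio of the class `ℱ` between `P` and `Q`
(i.e. `E_Q[(f−g)²] ≤ τ E_P[(f−g)²]` for all `f, g ∈ ℱ`), and some `f⋆ ∈ ℱ` fits the labeling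
function `y` up to error `ε` on the mixture `(P+Q)/2`, then every `f ∈ ℱ` satisfies
`E_Q[(y−f)²] ≤ (8τ+4)ε + 4τ E_P[(y−f)²]`. -/
theorem loss_transfer {X : Type*} [MeasurableSpace X]
    (P Q : Measure X) [IsProbabilityMeasure P] [IsProbabilityMeasure Q]
    (F : Set (X → ℝ)) (y : X → ℝ) (τ ε : ℝ) (hτ0 : 0 ≤ τ)
    (hτ : ∀ f ∈ F, ∀ g ∈ F,
      ∫ x, (f x - g x) ^ 2 ∂Q ≤ τ * ∫ x, (f x - g x) ^ 2 ∂P)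
    (hintP : ∀ f ∈ F, Integrable (fun x => (y x - f x) ^ 2) P)
    (hintQ : ∀ f ∈ F, Integrable (fun x => (y x - f x) ^ 2) Q)
    (hintPP : ∀ f ∈ F, ∀ g ∈ F, Integrable (fun x => (f x - g x) ^ 2) P)
    (hintQQ : ∀ f ∈ F, ∀ g ∈ F, Integrable (fun x => (f x - g x) ^ 2) Q)
    (fstar : X → ℝ) (hfstar : fstar ∈ F)
    (happrox : (∫ x, (y x - fstar x) ^ 2 ∂P) / 2 + (∫ x, (y x - fstar x) ^ 2 ∂Q) / 2 ≤ ε) :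
    ∀ f ∈ F, ∫ x, (y x - f x) ^ 2 ∂Q ≤
      (8 * τ + 4) * ε + 4 * τ * ∫ x, (y x - f x) ^ 2 ∂P := by

  intro f hf
  have iQs := hintQ fstar hfstar
  have iPs := hintP fstar hfstar
  have iQf := hintQ f hf
  have iPf := hintP f hf
  have iQQ := hintQQ fstar hfstar f hf
  have iPP := hintPP fstar hfstar f hf
  have hPs : 0 ≤ ∫ x, (y x - fstar x) ^ 2 ∂P :=
    integral_nonneg fun x => sq_nonneg _
  have hQs : 0 ≤ ∫ x, (y x - fstar x) ^ 2 ∂Q :=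
    integral_nonneg fun x => sq_nonneg _
  have hPε : ∫ x, (y x - fstar x) ^ 2 ∂P ≤ 2 * ε := by linarith
  have hQε : ∫ x, (y x - fstar x) ^ 2 ∂Q ≤ 2 * ε := by linarith
  -- step 1: E_Q[(y-f)^2] ≤ 2 E_Q[(y-fstar)^2] + 2 E_Q[(fstar-f)^2]
  have step1 : ∫ x, (y x - f x) ^ 2 ∂Q ≤
      2 * (∫ x, (y x - fstar x) ^ 2 ∂Q) + 2 * (∫ x, (fstar x - f x) ^ 2 ∂Q) := by
    have h : ∫ x, (y x - f x) ^ 2 ∂Q ≤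
        ∫ x, (2 * (y x - fstar x) ^ 2 + 2 * (fstar x - f x) ^ 2) ∂Q := by
      apply integral_mono iQf ((iQs.const_mul 2).add (iQQ.const_mul 2))
      intro x
      simp only [Pi.add_apply]
      nlinarith [sq_nonneg (y x - 2 * fstar x + f x)]
    rw [integral_add (iQs.const_mul 2) (iQQ.const_mul 2), integral_const_mul,
      integral_const_mul] at h
    exact h
  have step2 : ∫ x, (fstar x - f x) ^ 2 ∂Q ≤ τ * ∫ x, (fstar x - f x) ^ 2 ∂P :=
    hτ fstar hfstar f hf
  have step3 : ∫ x, (fstar x - f x) ^ 2 ∂P ≤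
      2 * (∫ x, (y x - fstar x) ^ 2 ∂P) + 2 * (∫ x, (y x - f x) ^ 2 ∂P) := by
    have h : ∫ x, (fstar x - f x) ^ 2 ∂P ≤
        ∫ x, (2 * (y x - fstar x) ^ 2 + 2 * (y x - f x) ^ 2) ∂P := by
      apply integral_mono iPP ((iPs.const_mul 2).add (iPf.const_mul 2))
      intro x
      simp only [Pi.add_apply]
      nlinarith [sq_nonneg (2 * y x - fstar x - f x)]
    rw [integral_add (iPs.const_mul 2) (iPf.const_mul 2), integral_const_mul,
      integral_const_mul] at h
    exact h
  have hPP : 0 ≤ ∫ x, (fstar x - f x) ^ 2 ∂P :=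
    integral_nonneg fun x => sq_nonneg _
  nlinarith [mul_le_mul_of_nonneg_left step3 hτ0, mul_le_mul_of_nonneg_left hPε hτ0]
end

section
/- Let ℱ be the class of two-layer ReLU networks Σᵢ aᵢ ReLU(wᵢᵀx + bᵢ) on the unit sphere S^{d−1}. Let P, Q be probability distributions supported on S^{d−1}. If there exists ε > 0 such that Q({x ∈ S^{d−1} : dist(x, supp(P)) ≥ ε}) > 0, then for every M > 0 there exists f ∈ ℱ with E_P[f(x)²] = 0 and E_Q[f(x)²] ≥ M. -/
open MeasureTheory

/-- A function is a two-layer ReLU network if it is a finite linear combination of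
neurons `x ↦ ReLU(wᵀx + b)`. -/
def IsTwoLayerReLU {d : ℕ} (f : EuclideanSpace ℝ (Fin d) → ℝ) : Prop :=
  ∃ (m : ℕ) (a : Fin m → ℝ) (w : Fin m → EuclideanSpace ℝ (Fin d)) (b : Fin m → ℝ),
    ∀ x, f x = ∑ i, a i * max ((inner ℝ (w i) x : ℝ) + b i) 0

/-- The (closed) support of a measure on a metric space: the set of points all of whose
neighborhoods have positive measure. -/
def measSupport {X : Type*} [MeasurableSpace X] [PseudoMetricSpace X] (μ : Measure X) :
    Set X := {x | ∀ r : ℝ, 0 < r → 0 < μ (Metric.ball x r)}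

/-!
Take `y` in the support of `Q`, on the sphere and at distance at least `ε` from the support
of `P`. For unit vectors `⟪y, x⟫ = 1 - ‖x - y‖² / 2`, so with `δ = ε² / 2` the two-neuron ramp
`x ↦ ReLU(⟪y, x⟫ - 1 + δ) - ReLU(⟪y, x⟫ - 1)` vanishes on the part of the sphere outside the
open `ε`-ball around `y`, hence `P`-a.e. It is positive at `y`, so its square has positive
`Q`-integral, and rescaling the output weights makes that integral as large as required.
-/

open scoped RealInnerProductSpace

lemma measSupport_eq_support {X : Type*} [MeasurableSpace X] [PseudoMetricSpace X]
    (μ : Measure X) : measSupport μ = μ.support :=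
  Set.ext fun _ => Metric.nhds_basis_ball.mem_measureSupport.symm

lemma integral_pos_of_continuous_of_mem_support {X : Type*} [TopologicalSpace X]
    [MeasurableSpace X] {μ : Measure X} {g : X → ℝ} {x : X}
    (hg : Continuous g) (hg0 : 0 ≤ g) (hgi : Integrable g μ) (hx : x ∈ μ.support)
    (hgx : 0 < g x) : 0 < ∫ y, g y ∂μ := by
  rw [integral_pos_iff_support_of_nonneg hg0 hgi]
  exact (Measure.mem_support_iff_forall x).1 hx _ (hg.isOpen_support.mem_nhds hgx.ne')

lemma exists_le_integral_const_mul_sq {X : Type*} [MeasurableSpace X] {μ : Measure X}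
    {g : X → ℝ} (hg : 0 < ∫ x, g x ^ 2 ∂μ) {M : ℝ} (hM : 0 ≤ M) :
    ∃ c : ℝ, M ≤ ∫ x, (c * g x) ^ 2 ∂μ := by
  refine ⟨√(M / ∫ x, g x ^ 2 ∂μ), le_of_eq ?_⟩
  simp_rw [mul_pow, integral_const_mul, Real.sq_sqrt (div_nonneg hM hg.le)]
  field_simp

def ramp (δ t : ℝ) : ℝ := max (t + δ) 0 - max t 0

section Ramp

variable {δ t : ℝ}

lemma ramp_nonneg (hδ : 0 ≤ δ) : 0 ≤ ramp δ t := by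
  unfold ramp; grind

lemma ramp_le (hδ : 0 ≤ δ) : ramp δ t ≤ δ := by
  unfold ramp; grind

lemma ramp_eq_zero_of_le (hδ : 0 ≤ δ) (ht : t ≤ -δ) : ramp δ t = 0 := by
  unfold ramp; grind

lemma ramp_zero (hδ : 0 ≤ δ) : ramp δ 0 = δ := by
  simp [ramp, hδ]

lemma continuous_ramp (δ : ℝ) : Continuous (ramp δ) := by
  unfold ramp; fun_prop

end Ramp

lemma isTwoLayerReLU_const_mul_ramp_inner {d : ℕ} (c δ b : ℝ) (y : EuclideanSpace ℝ (Fin d)) :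
    IsTwoLayerReLU fun x => c * ramp δ (⟪y, x⟫ + b) := by
  refine ⟨2, ![c, -c], ![y, y], ![b + δ, b], fun x => ?_⟩
  simp only [ramp, Fin.sum_univ_two, Matrix.cons_val_zero, Matrix.cons_val_one]
  ring_nf

lemma real_inner_eq_one_sub_dist_sq_div_two {E : Type*} [NormedAddCommGroup E]
    [InnerProductSpace ℝ E] {x y : E} (hx : ‖x‖ = 1) (hy : ‖y‖ = 1) :
    ⟪x, y⟫ = 1 - dist x y ^ 2 / 2 := by
  rw [dist_eq_norm, norm_sub_sq_real, hx, hy]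
  ring

lemma ramp_inner_sub_one_eq_zero_of_le_dist {E : Type*} [NormedAddCommGroup E]
    [InnerProductSpace ℝ E] {x y : E} {ε : ℝ} (hx : ‖x‖ = 1) (hy : ‖y‖ = 1) (hε : 0 ≤ ε)
    (hεx : ε ≤ dist y x) : ramp (ε ^ 2 / 2) (⟪y, x⟫ - 1) = 0 := by
  refine ramp_eq_zero_of_le (by positivity) ?_
  have := pow_le_pow_left₀ hε hεx 2
  rw [real_inner_eq_one_sub_dist_sq_div_two hy hx]
  linarith

theorem two_layer_relu_no_extrapolation_general (d : ℕ)
    (P Q : Measure (EuclideanSpace ℝ (Fin d)))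
    [IsProbabilityMeasure Q]
    (hsuppP : P {x | ‖x‖ ≠ 1} = 0)
    (hsep : ∃ ε : ℝ, 0 < ε ∧
      0 < Q {x | ‖x‖ = 1 ∧ ε ≤ Metric.infDist x (measSupport P)}) :
    ∀ M : ℝ, 0 < M → ∃ f : EuclideanSpace ℝ (Fin d) → ℝ, IsTwoLayerReLU f ∧
      ∫ x, (f x) ^ 2 ∂P = 0 ∧ M ≤ ∫ x, (f x) ^ 2 ∂Q := by
  intro M hM
  obtain ⟨ε, hε, hQA⟩ := hsep
  obtain ⟨y, ⟨hy1, hyP⟩, hyQ⟩ := Measure.nonempty_inter_support_of_pos hQA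
  set δ := ε ^ 2 / 2
  have hδ : 0 < δ := by positivity
  set g : EuclideanSpace ℝ (Fin d) → ℝ := fun x => ramp δ (⟪y, x⟫ - 1)
  have hg : Continuous g := (continuous_ramp δ).comp (by fun_prop)
  have hgP : ∀ᵐ x ∂P, g x = 0 := by
    rw [measSupport_eq_support] at hyP
    filter_upwards [Measure.support_mem_ae, measure_eq_zero_iff_ae_notMem.1 hsuppP]
      with x hxP hx1
    exact ramp_inner_sub_one_eq_zero_of_le_dist (not_not.1 hx1) hy1 hε.le
      (hyP.trans (Metric.infDist_le_dist_of_mem hxP))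
  have hgy : g y = δ := by
    simp only [g, real_inner_self_eq_norm_sq, hy1, one_pow, sub_self, ramp_zero hδ.le]
  have hg2Q : Integrable (fun x => g x ^ 2) Q := by
    refine .of_bound (hg.pow 2).aestronglyMeasurable (δ ^ 2) (ae_of_all _ fun x => ?_)
    rw [Real.norm_eq_abs, abs_of_nonneg (sq_nonneg _)]
    exact pow_le_pow_left₀ (ramp_nonneg hδ.le) (ramp_le hδ.le) 2
  have hgQ : 0 < ∫ x, g x ^ 2 ∂Q :=
    integral_pos_of_continuous_of_mem_support (hg.pow 2) (fun x => sq_nonneg _) hg2Q hyQ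
      (by rw [hgy]; positivity)
  obtain ⟨c, hc⟩ := exists_le_integral_const_mul_sq hgQ hM.le
  refine ⟨fun x => c * g x, isTwoLayerReLU_const_mul_ramp_inner c δ (-1) y, ?_, hc⟩
  exact integral_eq_zero_of_ae (by filter_upwards [hgP] with x hx; simp [hx])

/-- If `P, Q` are probability measures supported on the unit sphere and `Q` puts positive mass
on unit vectors at distance at least `ε > 0` from the support of `P`, then for every `M > 0`
there is a two-layer ReLU network `f` with `E_P[f²] = 0` and `E_Q[f²] ≥ M`. -/
theorem two_layer_relu_no_extrapolation (d : ℕ)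
    (P Q : Measure (EuclideanSpace ℝ (Fin d)))
    [IsProbabilityMeasure P] [IsProbabilityMeasure Q]
    (hsuppP : P {x | ‖x‖ ≠ 1} = 0) (hsuppQ : Q {x | ‖x‖ ≠ 1} = 0)
    (hsep : ∃ ε : ℝ, 0 < ε ∧
      0 < Q {x | ‖x‖ = 1 ∧ ε ≤ Metric.infDist x (measSupport P)}) :
    ∀ M : ℝ, 0 < M → ∃ f : EuclideanSpace ℝ (Fin d) → ℝ, IsTwoLayerReLU f ∧
      ∫ x, (f x) ^ 2 ∂P = 0 ∧ M ≤ ∫ x, (f x) ^ 2 ∂Q :=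
  two_layer_relu_no_extrapolation_general d P Q hsuppP hsep
end
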